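/- Optimality chain for the choice N = N_δ: assume the sequence {μ_k/ξ_k} is monotone nonincreasing with μ_k/ξ_k → 0, and let δ > 0 satisfy δ < 1/ξ_0 (so N_δ ≥ 1). Then μ_{N_δ}/ξ_{N_δ} ≤ R_δ(A,W)_H ≤ R_{N_δ,δ}(A,W)_H ≤ ε_δ(A,W,G̃_{N_δ},Ψ̃_{N_δ})_H ≤ ( μ_{N_δ}²/ξ_{N_δ}² + μ_{N_δ−1}²/ξ_{N_δ−1}² )^{1/2}. -/

import Mathlib

/-!
Lower bound: `±ξ_N⁻¹ w_N` lie in the unit ball of `W`, are `δ`-close to the common datum `0`,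
and `A` maps them to `±(μ_N / ξ_N) w_N`, so any method misses one of them by `μ_N / ξ_N`.

Upper bound: the error of the truncation method has coefficients `μ_k ⟨f - f^δ, w_k⟩` for
`k < N` and `μ_k ⟨f, w_k⟩` for `k ≥ N`. Bessel's inequality bounds the first block by
`μ_{N-1}² δ²`, which minimality of `N_δ` turns into `(μ_{N-1} / ξ_{N-1})²`; as `μ_k / ξ_k`
is nonincreasing, the second block is at most `(μ_N / ξ_N)² ‖f‖_W²`.
-/

noncomputable section

open Filter
open scoped ENNReal RealInnerProductSpace

variable {H : Type*} [NormedAddCommGroup H] [InnerProductSpace ℝ H] [CompleteSpace H]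

/-- `f` belongs to the source set `W`. -/
def MemW (w : ℕ → H) (ξ : ℕ → ℝ) (f : H) : Prop :=
  Summable fun k => ξ k ^ 2 * ⟪f, w k⟫ ^ 2

/-- The `W`-norm of `f`. -/
def normW (w : ℕ → H) (ξ : ℕ → ℝ) (f : H) : ℝ :=
  Real.sqrt (∑' k, ξ k ^ 2 * ⟪f, w k⟫ ^ 2)

/-- The unbounded operator `A`, defined spectrally by `A f = ∑ μ_k ⟨f, w_k⟩ w_k`. -/
def opA (w : ℕ → H) (μ : ℕ → ℝ) (f : H) : H :=
  ∑' k, (μ k * ⟪f, w k⟫) • w k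

/-- The worst case recovery error `ε_δ(A, W, G, Ψ)_H` of the pair `(G, Ψ)`. -/
def recErr (w : ℕ → H) (μ ξ : ℕ → ℝ) (δ : ℝ) {N : ℕ}
    (G : H → Fin N → ℝ) (Ψ : (Fin N → ℝ) → H) : ℝ≥0∞ :=
  ⨆ (f : H) (_ : MemW w ξ f ∧ normW w ξ f ≤ 1) (fδ : H) (_ : ‖f - fδ‖ ≤ δ),
    ENNReal.ofReal ‖opA w μ f - Ψ (G fδ)‖

/-- The `(N,δ)`-optimal recovery error `R_{N,δ}(A, W)_H`. -/
def Ropt (w : ℕ → H) (μ ξ : ℕ → ℝ) (δ : ℝ) (N : ℕ) : ℝ≥0∞ :=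
  ⨅ (G : H → Fin N → ℝ) (_ : Continuous G) (Ψ : (Fin N → ℝ) → H),
    recErr w μ ξ δ G Ψ

/-- The `δ`-optimal recovery error `R_δ(A, W)_H`. -/
def RoptAll (w : ℕ → H) (μ ξ : ℕ → ℝ) (δ : ℝ) : ℝ≥0∞ :=
  ⨅ N : ℕ, Ropt w μ ξ δ N

/-- The critical index `N_δ = min {N ≥ 0 : ξ_N ≥ 1/δ}`. -/
def Ncrit (ξ : ℕ → ℝ) (δ : ℝ) : ℕ := sInf {N : ℕ | 1 / δ ≤ ξ N}

/-- The information map of the truncation method: the first `N` Fourier coefficients. -/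
def Gtrunc (w : ℕ → H) (N : ℕ) (f : H) : Fin N → ℝ := fun k => ⟪f, w k⟫

/-- The recovery algorithm of the truncation method. -/
def Psitrunc (w : ℕ → H) (μ : ℕ → ℝ) (N : ℕ) (x : Fin N → ℝ) : H :=
  ∑ k : Fin N, (μ k * x k) • w k

theorem norm_le_max_norm_sub_norm_neg_sub {E : Type*} [SeminormedAddCommGroup E]
    [NormedSpace ℝ E] (x y : E) : ‖x‖ ≤ max ‖x - y‖ ‖-x - y‖ := by
  have h : ‖(2 : ℝ) • x‖ ≤ ‖x - y‖ + ‖-x - y‖ := by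
    simpa [two_smul, sub_sub_sub_cancel_right, sub_neg_eq_add] using norm_sub_le (x - y) (-x - y)
  rw [norm_smul, Real.norm_two] at h
  linarith [le_max_left ‖x - y‖ ‖-x - y‖, le_max_right ‖x - y‖ ‖-x - y‖]

theorem sq_mul_le_of_div_le {μ ξ r : ℝ} (hξ : ξ ≠ 0) (h₀ : 0 ≤ μ / ξ) (hr : μ / ξ ≤ r) (x : ℝ) :
    (μ * x) ^ 2 ≤ r ^ 2 * (ξ ^ 2 * x ^ 2) :=
  calc (μ * x) ^ 2 = (μ / ξ) ^ 2 * (ξ ^ 2 * x ^ 2) := by field_simp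
    _ ≤ r ^ 2 * (ξ ^ 2 * x ^ 2) := by gcongr

section Orthonormal

variable {ι E : Type*} [NormedAddCommGroup E] [InnerProductSpace ℝ E] {v : ι → E}

theorem Orthonormal.hasSum_sq_of_hasSum (hv : Orthonormal ℝ v) {c : ι → ℝ} {x : E}
    (h : HasSum (fun i => c i • v i) x) : HasSum (fun i => c i ^ 2) (‖x‖ ^ 2) := by
  have hfin (s : Finset ι) : ‖∑ i ∈ s, c i • v i‖ ^ 2 = ∑ i ∈ s, c i ^ 2 := by
    rw [← real_inner_self_eq_norm_sq, hv.inner_sum]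
    simp [sq]
  have := ((continuous_norm.pow 2).tendsto x).comp h
  simpa [HasSum, Function.comp_def, hfin] using this

theorem Orthonormal.summable_smul_of_summable_sq [CompleteSpace E] (hv : Orthonormal ℝ v)
    {c : ι → ℝ} (hc : Summable fun i => c i ^ 2) : Summable fun i => c i • v i :=
  (hv.orthogonalFamily.summable_iff_norm_sq_summable c).mpr (by simpa using hc)

theorem Orthonormal.mul_sum_sq_inner_le (hv : Orthonormal ℝ v) {m δ r : ℝ} (hm : 0 ≤ m)
    (hδr : δ ≤ r) {g : E} (hg : ‖g‖ ≤ δ) (s : Finset ι) :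
    m ^ 2 * ∑ i ∈ s, ⟪g, v i⟫ ^ 2 ≤ (m * r) ^ 2 := by
  have hbessel : ∑ i ∈ s, ⟪g, v i⟫ ^ 2 ≤ ‖g‖ ^ 2 := by
    simpa [real_inner_comm] using hv.sum_inner_products_le (s := s) g
  have hδ : 0 ≤ δ := (norm_nonneg g).trans hg
  calc m ^ 2 * ∑ i ∈ s, ⟪g, v i⟫ ^ 2 ≤ (m * δ) ^ 2 := by
        rw [mul_pow]
        gcongr
        exact hbessel.trans (by gcongr)
    _ ≤ (m * r) ^ 2 := by gcongr

end Orthonormal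

section SpectralSetting

variable {E : Type*} [NormedAddCommGroup E] [InnerProductSpace ℝ E]
  {w : ℕ → E} {μ ξ : ℕ → ℝ} {δ : ℝ}

theorem memW_neg {f : E} : MemW w ξ (-f) ↔ MemW w ξ f := by
  simp only [MemW, inner_neg_left, neg_sq]

theorem normW_neg (f : E) : normW w ξ (-f) = normW w ξ f := by
  simp only [normW, inner_neg_left, neg_sq]

theorem opA_neg (f : E) : opA w μ (-f) = -opA w μ f := by
  simp only [opA, inner_neg_left, mul_neg, neg_smul, tsum_neg]

theorem sum_le_one_of_normW_le_one {f : E} (hf : normW w ξ f ≤ 1) :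
    ∑' k, ξ k ^ 2 * ⟪f, w k⟫ ^ 2 ≤ 1 :=
  Real.sqrt_le_one.mp hf

theorem Orthonormal.inner_smul_left_eq_ite (hw : Orthonormal ℝ w) (c : ℝ) (n k : ℕ) :
    ⟪c • w n, w k⟫ = if k = n then c else 0 := by
  rw [real_inner_smul_left, orthonormal_iff_ite.mp hw]
  split_ifs <;> simp_all [eq_comm]

theorem Orthonormal.hasSum_W_series_smul (hw : Orthonormal ℝ w) (c : ℝ) (n : ℕ) :
    HasSum (fun k => ξ k ^ 2 * ⟪c • w n, w k⟫ ^ 2) (ξ n ^ 2 * c ^ 2) := by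
  convert hasSum_ite_eq n (ξ n ^ 2 * c ^ 2) using 2 with k
  rw [hw.inner_smul_left_eq_ite]
  split_ifs with h <;> simp [h]

theorem Orthonormal.opA_smul (hw : Orthonormal ℝ w) (c : ℝ) (n : ℕ) :
    opA w μ (c • w n) = (μ n * c) • w n := by
  rw [opA, tsum_eq_single n fun k hk => by simp [hw.inner_smul_left_eq_ite, hk],
    hw.inner_smul_left_eq_ite, if_pos rfl]

theorem le_recErr {N : ℕ} (G : E → Fin N → ℝ) (Ψ : (Fin N → ℝ) → E) {f fδ : E}
    (hf : MemW w ξ f) (hf₁ : normW w ξ f ≤ 1) (hfδ : ‖f - fδ‖ ≤ δ) :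
    ENNReal.ofReal ‖opA w μ f - Ψ (G fδ)‖ ≤ recErr w μ ξ δ G Ψ :=
  le_iSup₂_of_le f ⟨hf, hf₁⟩ (le_iSup₂_of_le fδ hfδ le_rfl)

theorem norm_opA_le_recErr {N : ℕ} (G : E → Fin N → ℝ) (Ψ : (Fin N → ℝ) → E) {f : E}
    (hf : MemW w ξ f) (hf₁ : normW w ξ f ≤ 1) (hfδ : ‖f‖ ≤ δ) :
    ENNReal.ofReal ‖opA w μ f‖ ≤ recErr w μ ξ δ G Ψ := by
  have hpos := le_recErr (μ := μ) G Ψ hf hf₁ (fδ := 0) (by simpa using hfδ)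
  have hneg := le_recErr (μ := μ) G Ψ (memW_neg.mpr hf) ((normW_neg f).trans_le hf₁) (fδ := 0)
    (by simpa using hfδ)
  rw [opA_neg] at hneg
  calc ENNReal.ofReal ‖opA w μ f‖
      ≤ ENNReal.ofReal (max ‖opA w μ f - Ψ (G 0)‖ ‖-opA w μ f - Ψ (G 0)‖) :=
        ENNReal.ofReal_le_ofReal (norm_le_max_norm_sub_norm_neg_sub _ _)
    _ ≤ recErr w μ ξ δ G Ψ := by
        rw [ENNReal.ofReal_max]
        exact max_le hpos hneg

theorem Orthonormal.ofReal_div_le_recErr (hw : Orthonormal ℝ w) {n : ℕ} (hμ : 0 ≤ μ n)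
    (hξ : 0 < ξ n) (hδ : 0 < δ) (hn : 1 / δ ≤ ξ n) {N : ℕ} (G : E → Fin N → ℝ)
    (Ψ : (Fin N → ℝ) → E) : ENNReal.ofReal (μ n / ξ n) ≤ recErr w μ ξ δ G Ψ := by
  have hW := hw.hasSum_W_series_smul (ξ := ξ) (ξ n)⁻¹ n
  rw [← mul_pow, mul_inv_cancel₀ hξ.ne', one_pow] at hW
  have hnorm : ‖(ξ n)⁻¹ • w n‖ ≤ δ := by
    rw [norm_smul, hw.1 n, mul_one, norm_inv, Real.norm_of_nonneg hξ.le]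
    exact inv_le_of_inv_le₀ hδ (one_div δ ▸ hn)
  have := norm_opA_le_recErr (μ := μ) G Ψ hW.summable (by rw [normW, hW.tsum_eq, Real.sqrt_one])
    hnorm
  rwa [hw.opA_smul, norm_smul, hw.1 n, mul_one, Real.norm_of_nonneg (by positivity),
    ← div_eq_mul_inv] at this

theorem continuous_Gtrunc (w : ℕ → E) (N : ℕ) : Continuous (Gtrunc w N) :=
  continuous_pi fun _ => continuous_id.inner continuous_const

theorem Psitrunc_Gtrunc (N : ℕ) (g : E) :
    Psitrunc w μ N (Gtrunc w N g) = ∑ k ∈ Finset.range N, (μ k * ⟪g, w k⟫) • w k :=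
  Fin.sum_univ_eq_sum_range (fun k => (μ k * ⟪g, w k⟫) • w k) N

theorem Orthonormal.hasSum_opA [CompleteSpace E] (hw : Orthonormal ℝ w) (hμ : ∀ k, 0 ≤ μ k)
    (hξ : ∀ k, 0 < ξ k) (hanti : Antitone fun k => μ k / ξ k) {f : E} (hf : MemW w ξ f) :
    HasSum (fun k => (μ k * ⟪f, w k⟫) • w k) (opA w μ f) := by
  refine (hw.summable_smul_of_summable_sq (hf.mul_left ((μ 0 / ξ 0) ^ 2) |>.of_nonneg_of_le
    (fun _ => sq_nonneg _) fun k => ?_)).hasSum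
  exact sq_mul_le_of_div_le (hξ k).ne' (div_nonneg (hμ k) (hξ k).le) (hanti k.zero_le) _

theorem Orthonormal.hasSum_truncation_error [CompleteSpace E] (hw : Orthonormal ℝ w)
    (hμ : ∀ k, 0 ≤ μ k) (hξ : ∀ k, 0 < ξ k) (hanti : Antitone fun k => μ k / ξ k) (N : ℕ)
    {f : E} (hf : MemW w ξ f) (fδ : E) :
    HasSum (fun k => (if k < N then μ k * ⟪f - fδ, w k⟫ else μ k * ⟪f, w k⟫) • w k)
      (opA w μ f - Psitrunc w μ N (Gtrunc w N fδ)) := by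
  have hhead : HasSum (fun k => if k < N then (μ k * ⟪fδ, w k⟫) • w k else 0)
      (Psitrunc w μ N (Gtrunc w N fδ)) := by
    rw [Psitrunc_Gtrunc, ← Finset.sum_ite_of_true (fun k hk => Finset.mem_range.mp hk) _
      fun _ => (0 : E)]
    exact hasSum_sum_of_ne_finset_zero fun k hk => if_neg (by simpa using hk)
  convert (hw.hasSum_opA hμ hξ hanti hf).sub hhead using 2 with k
  split_ifs <;> simp [inner_sub_left, mul_sub, sub_smul]

theorem Orthonormal.norm_truncation_error_sq_le [CompleteSpace E] (hw : Orthonormal ℝ w)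
    (hμ : ∀ k, 0 ≤ μ k) (hμmono : Monotone μ) (hξ : ∀ k, 0 < ξ k)
    (hanti : Antitone fun k => μ k / ξ k) {N : ℕ} (hδN : δ ≤ 1 / ξ (N - 1)) {f fδ : E}
    (hf : MemW w ξ f) (hf₁ : normW w ξ f ≤ 1) (hfδ : ‖f - fδ‖ ≤ δ) :
    ‖opA w μ f - Psitrunc w μ N (Gtrunc w N fδ)‖ ^ 2 ≤
      (μ N / ξ N) ^ 2 + (μ (N - 1) / ξ (N - 1)) ^ 2 := by
  set g := f - fδ
  have hhead : HasSum (fun k => if k < N then μ (N - 1) ^ 2 * ⟪g, w k⟫ ^ 2 else 0)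
      (μ (N - 1) ^ 2 * ∑ k ∈ Finset.range N, ⟪g, w k⟫ ^ 2) := by
    rw [Finset.mul_sum, ← Finset.sum_ite_of_true (fun k hk => Finset.mem_range.mp hk) _
      fun _ => (0 : ℝ)]
    exact hasSum_sum_of_ne_finset_zero fun k hk => if_neg (by simpa using hk)
  have htail := hf.hasSum.mul_left ((μ N / ξ N) ^ 2)
  have hsplit := hasSum_le (fun k => ?_)
    (hw.hasSum_sq_of_hasSum (hw.hasSum_truncation_error hμ hξ hanti N hf fδ)) (hhead.add htail)
  · calc ‖opA w μ f - Psitrunc w μ N (Gtrunc w N fδ)‖ ^ 2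
        ≤ (μ (N - 1) * (1 / ξ (N - 1))) ^ 2 + (μ N / ξ N) ^ 2 * 1 :=
          hsplit.trans (add_le_add (hw.mul_sum_sq_inner_le (hμ _) hδN hfδ _)
            (by gcongr; exact sum_le_one_of_normW_le_one hf₁))
      _ = (μ N / ξ N) ^ 2 + (μ (N - 1) / ξ (N - 1)) ^ 2 := by rw [mul_one_div, mul_one, add_comm]
  · split_ifs with hk
    · have hμk : μ k ≤ μ (N - 1) := hμmono (by omega)
      calc (μ k * ⟪g, w k⟫) ^ 2 ≤ μ (N - 1) ^ 2 * ⟪g, w k⟫ ^ 2 := by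
            rw [mul_pow]
            gcongr
            exact hμ k
        _ ≤ _ := le_add_of_nonneg_right (by positivity)
    · rw [zero_add]
      exact sq_mul_le_of_div_le (hξ k).ne' (div_nonneg (hμ k) (hξ k).le) (hanti (not_lt.mp hk)) _

theorem Orthonormal.recErr_trunc_le [CompleteSpace E] (hw : Orthonormal ℝ w)
    (hμ : ∀ k, 0 ≤ μ k) (hμmono : Monotone μ) (hξ : ∀ k, 0 < ξ k)
    (hanti : Antitone fun k => μ k / ξ k) {N : ℕ} (hδN : δ ≤ 1 / ξ (N - 1)) :
    recErr w μ ξ δ (Gtrunc w N) (Psitrunc w μ N) ≤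
      ENNReal.ofReal (Real.sqrt ((μ N / ξ N) ^ 2 + (μ (N - 1) / ξ (N - 1)) ^ 2)) :=
  iSup₂_le fun _ hf => iSup₂_le fun _ hfδ => ENNReal.ofReal_le_ofReal <| Real.le_sqrt_of_sq_le <|
    hw.norm_truncation_error_sq_le hμ hμmono hξ hanti hδN hf.1 hf.2 hfδ

end SpectralSetting

section CriticalIndex

variable {ξ : ℕ → ℝ} {δ : ℝ}

theorem one_div_le_Ncrit (hξ : Tendsto ξ atTop atTop) : 1 / δ ≤ ξ (Ncrit ξ δ) :=
  Nat.sInf_mem (hξ.eventually_ge_atTop (1 / δ)).exists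

theorem Ncrit_pred_lt (h₀ : ξ 0 < 1 / δ) : ξ (Ncrit ξ δ - 1) < 1 / δ := by
  rcases Nat.eq_zero_or_pos (Ncrit ξ δ) with h | h
  · rwa [h]
  · exact not_le.mp (Nat.notMem_of_lt_sInf (Nat.sub_lt h one_pos))

end CriticalIndex

theorem stmt9_general
    (w : ℕ → H) (hw_on : Orthonormal ℝ w)
    (μ ξ : ℕ → ℝ)
    (hμ0 : 0 < μ 0) (hμmono : Monotone μ)
    (hξ0 : 0 < ξ 0) (hξmono : Monotone ξ) (hξtop : Tendsto ξ atTop atTop)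
    (hanti : Antitone fun k => μ k / ξ k) :
    ∀ δ : ℝ, 0 < δ → δ < 1 / ξ 0 →
      ENNReal.ofReal (μ (Ncrit ξ δ) / ξ (Ncrit ξ δ)) ≤ RoptAll w μ ξ δ ∧
        RoptAll w μ ξ δ ≤ Ropt w μ ξ δ (Ncrit ξ δ) ∧
          Ropt w μ ξ δ (Ncrit ξ δ) ≤
            recErr w μ ξ δ (Gtrunc w (Ncrit ξ δ)) (Psitrunc w μ (Ncrit ξ δ)) ∧
            recErr w μ ξ δ (Gtrunc w (Ncrit ξ δ)) (Psitrunc w μ (Ncrit ξ δ)) ≤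
              ENNReal.ofReal (Real.sqrt
                ((μ (Ncrit ξ δ) / ξ (Ncrit ξ δ)) ^ 2 +
                  (μ (Ncrit ξ δ - 1) / ξ (Ncrit ξ δ - 1)) ^ 2)) := by
  intro δ hδ hδξ
  have hμ : ∀ k, 0 ≤ μ k := fun k => hμ0.le.trans (hμmono k.zero_le)
  have hξ : ∀ k, 0 < ξ k := fun k => hξ0.trans_le (hξmono k.zero_le)
  have hδN : δ ≤ 1 / ξ (Ncrit ξ δ - 1) :=
    (le_one_div (hξ _) hδ).mp (Ncrit_pred_lt ((lt_one_div hδ hξ0).mp hδξ)).le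
  refine ⟨le_iInf fun _ => le_iInf₂ fun G _ => le_iInf fun Ψ => ?_, iInf_le _ _,
    (iInf₂_le _ (continuous_Gtrunc w _)).trans (iInf_le _ _),
    hw_on.recErr_trunc_le hμ hμmono hξ hanti hδN⟩
  exact hw_on.ofReal_div_le_recErr (hμ _) (hξ _) hδ (one_div_le_Ncrit hξtop) G Ψ

/-- optimality chain for the choice `N = N_δ`. -/
theorem stmt9
    (w : ℕ → H) (hw_on : Orthonormal ℝ w)
    (hw_dense : Dense (Submodule.span ℝ (Set.range w) : Set H))
    (μ ξ : ℕ → ℝ)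
    (hμ0 : 0 < μ 0) (hμmono : Monotone μ) (hμtop : Tendsto μ atTop atTop)
    (hξ0 : 0 < ξ 0) (hξmono : Monotone ξ) (hξtop : Tendsto ξ atTop atTop)
    (hratio : Tendsto (fun k => μ k / ξ k) atTop (nhds 0))
    (hanti : Antitone fun k => μ k / ξ k) :
    ∀ δ : ℝ, 0 < δ → δ < 1 / ξ 0 →
      ENNReal.ofReal (μ (Ncrit ξ δ) / ξ (Ncrit ξ δ)) ≤ RoptAll w μ ξ δ ∧
        RoptAll w μ ξ δ ≤ Ropt w μ ξ δ (Ncrit ξ δ) ∧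
          Ropt w μ ξ δ (Ncrit ξ δ) ≤
            recErr w μ ξ δ (Gtrunc w (Ncrit ξ δ)) (Psitrunc w μ (Ncrit ξ δ)) ∧
            recErr w μ ξ δ (Gtrunc w (Ncrit ξ δ)) (Psitrunc w μ (Ncrit ξ δ)) ≤
              ENNReal.ofReal (Real.sqrt
                ((μ (Ncrit ξ δ) / ξ (Ncrit ξ δ)) ^ 2 +
                  (μ (Ncrit ξ δ - 1) / ξ (Ncrit ξ δ - 1)) ^ 2)) :=
  stmt9_general w hw_on μ ξ hμ0 hμmono hξ0 hξmono hξtop hanti
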